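/- arXiv:2210.10067 — 2 statements merged into one kernel-verified Lean document; each statement's English description precedes it below -/
import Mathlib

section
/- Let χ < 0, ν > 0, and let (c, u, v) be a traveling wave solution of (TW) with parameters χ, ν. If u has a local minimum at a point x_m, then u(x_m) ≥ (ν + v(x_m))/(ν + 1); if u has a local maximum at x_m, then u(x_m) ≤ (ν + v(x_m))/(ν + 1). -/
open MeasureTheory Filter Set

/-- The kernel `𝒦_ν(z) = (1/(2√ν)) e^{−|z|/√ν}`. -/
noncomputable def Kker (ν z : ℝ) : ℝ := (1 / (2 * Real.sqrt ν)) * Real.exp (-|z| / Real.sqrt ν)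

/-- A traveling wave solution `(c, u, v)` of (TW) with parameters `χ, ν`. -/
def IsTWSolution (χ ν c : ℝ) (u v : ℝ → ℝ) : Prop :=
  ContDiff ℝ 2 u ∧ ContDiff ℝ 2 v ∧
  (∀ x, 0 < u x ∧ u x < 1) ∧ (∀ x, 0 < v x ∧ v x < 1) ∧
  (∀ x, -(c * deriv u x) - deriv (fun y => deriv v y * u y) x
      = (1 / |χ|) * deriv (deriv u) x + u x * (1 - u x)) ∧
  (∀ x, -(ν * deriv (deriv v) x) = u x - v x) ∧
  (∀ x, v x = ∫ y, Kker ν (x - y) * u y) ∧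
  Tendsto u atBot (nhds 1) ∧ Tendsto u atTop (nhds 0)

/-! At a critical point `x` of `u`, eliminating `v''` between the two equations of (TW) gives
`ν u''(x) / |χ| = u(x) ((ν + 1) u(x) − (ν + v(x)))`. Since `u > 0`, the sign of `u''(x)` at a
local extremum therefore decides on which side of `(ν + v(x)) / (ν + 1)` the value `u(x)` lies. -/

section SecondDerivative

variable {f : ℝ → ℝ} {a : ℝ}

/- Necessary second-order conditions from the sufficient second-derivative test: a strict sign of
`f''(a)` at a local extremum would make `a` an extremum of the other kind as well, so `f` would be
constant near `a` and `f''(a) = 0`. -/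

theorem deriv_deriv_eq_zero_of_isLocalMin_of_isLocalMax (hmin : IsLocalMin f a)
    (hmax : IsLocalMax f a) : deriv (deriv f) a = 0 := by
  have hconst : f =ᶠ[nhds a] fun _ => f a := by
    filter_upwards [hmin, hmax] with x hx₁ hx₂ using le_antisymm hx₂ hx₁
  have hderiv : deriv f =ᶠ[nhds a] fun _ => 0 := by
    simpa only [deriv_const'] using hconst.deriv
  simpa only [deriv_const'] using hderiv.deriv_eq

theorem IsLocalMin.deriv_deriv_nonneg (hmin : IsLocalMin f a) (hf : ContinuousAt f a) :
    0 ≤ deriv (deriv f) a := by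
  by_contra! hneg
  have hmax := isLocalMax_of_deriv_deriv_neg hneg hmin.deriv_eq_zero hf
  exact hneg.ne (deriv_deriv_eq_zero_of_isLocalMin_of_isLocalMax hmin hmax)

theorem IsLocalMax.deriv_deriv_nonpos (hmax : IsLocalMax f a) (hf : ContinuousAt f a) :
    deriv (deriv f) a ≤ 0 := by
  by_contra! hpos
  have hmin := isLocalMin_of_deriv_deriv_pos hpos hmax.deriv_eq_zero hf
  exact hpos.ne' (deriv_deriv_eq_zero_of_isLocalMin_of_isLocalMax hmin hmax)

end SecondDerivative

theorem IsTWSolution.mul_deriv_deriv_eq_of_deriv_eq_zero {χ ν c : ℝ} {u v : ℝ → ℝ}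
    (hsol : IsTWSolution χ ν c u v) {x : ℝ} (hx : deriv u x = 0) :
    ν * ((1 / |χ|) * deriv (deriv u) x) = u x * ((ν + 1) * u x - (ν + v x)) := by
  obtain ⟨hu, hv, -, -, hueq, hveq, -⟩ := hsol
  have hprod : deriv (fun y => deriv v y * u y) x
      = deriv (deriv v) x * u x + deriv v x * deriv u x :=
    ((hv.differentiable_deriv_two x).hasDerivAt.mul
      ((hu.differentiable two_ne_zero) x).hasDerivAt).deriv
  have hueq := hueq x
  have hveq := hveq x
  rw [hprod, hx] at hueq
  linear_combination (-ν) * hueq + u x * hveq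

theorem tw_local_extrema_general (χ ν c : ℝ) (u v : ℝ → ℝ) (hν : 0 < ν)
    (hsol : IsTWSolution χ ν c u v) (xm : ℝ) :
    (IsLocalMin u xm → (ν + v xm) / (ν + 1) ≤ u xm) ∧
    (IsLocalMax u xm → u xm ≤ (ν + v xm) / (ν + 1)) := by
  have hu_pos : 0 < u xm := (hsol.2.2.1 xm).1
  have hcont : ContinuousAt u xm := hsol.1.continuous.continuousAt
  have hχ_inv : 0 ≤ 1 / |χ| := by positivity
  have hν₁ : 0 < ν + 1 := by linarith
  constructor
  · intro hmin
    have hid := hsol.mul_deriv_deriv_eq_of_deriv_eq_zero hmin.deriv_eq_zero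
    have hlhs : 0 ≤ ν * ((1 / |χ|) * deriv (deriv u) xm) :=
      mul_nonneg hν.le (mul_nonneg hχ_inv (hmin.deriv_deriv_nonneg hcont))
    rw [hid] at hlhs
    rw [div_le_iff₀ hν₁]
    linarith [(mul_nonneg_iff_of_pos_left hu_pos).mp hlhs]
  · intro hmax
    have hid := hsol.mul_deriv_deriv_eq_of_deriv_eq_zero hmax.deriv_eq_zero
    have hlhs : ν * ((1 / |χ|) * deriv (deriv u) xm) ≤ 0 :=
      mul_nonpos_of_nonneg_of_nonpos hν.le (mul_nonpos_of_nonneg_of_nonpos hχ_inv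
        (hmax.deriv_deriv_nonpos hcont))
    rw [hid] at hlhs
    rw [le_div_iff₀ hν₁]
    linarith [(mul_nonpos_iff_pos_imp_nonpos.mp hlhs).1 hu_pos]

/-- values of `u` at local extrema of a (TW) traveling wave. -/
theorem tw_local_extrema (χ ν c : ℝ) (u v : ℝ → ℝ) (hχ : χ < 0) (hν : 0 < ν)
    (hsol : IsTWSolution χ ν c u v) (xm : ℝ) :
    (IsLocalMin u xm → (ν + v xm) / (ν + 1) ≤ u xm) ∧
    (IsLocalMax u xm → u xm ≤ (ν + v xm) / (ν + 1)) :=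
  tw_local_extrema_general χ ν c u v hν hsol xm
end

section
/- Let a < b, c ∈ ℝ, and let u : (a, b) → ℝ be twice continuously differentiable, nonconstant, with 0 ≤ u(x) ≤ 1 for all x ∈ (a, b), satisfying −c u'(x) − (u(x) u'(x))' = u(x)(1 − u(x)) pointwise on (a, b). If u has a local minimum at a point x̃ ∈ (a, b) and u(x̃) ≠ 1, then u(x̃) = 0. -/
open MeasureTheory Filter Set
open Topology

/-!
At an interior local minimum `u' = 0` and `u'' ≥ 0`, so the equation reduces there to
`-u u'' = u (1 - u)`: the left side is `≤ 0` and the right side is `≥ 0` since `0 ≤ u ≤ 1`.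
Hence `u (1 - u) = 0` at the minimum.
-/

/-- No differentiability is needed: where `deriv` does not exist it is the junk value `0`. -/
theorem IsLocalMin.deriv_deriv_nonneg_s17 {f : ℝ → ℝ} {x₀ : ℝ} (h : IsLocalMin f x₀)
    (hc : ContinuousAt f x₀) : 0 ≤ deriv (deriv f) x₀ := by
  by_contra! hneg
  -- The second derivative test makes `x₀` also a local maximum, so `f` is locally constant.
  have hmax : IsLocalMax f x₀ := isLocalMax_of_deriv_deriv_neg hneg h.deriv_eq_zero hc
  have hconst : f =ᶠ[𝓝 x₀] fun _ => f x₀ :=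
    (h.and hmax).mono fun _ hx => le_antisymm hx.2 hx.1
  have hderiv : deriv (deriv f) x₀ = 0 := by
    rw [hconst.deriv.deriv_eq]
    simp
  exact hneg.ne hderiv

theorem IsLocalMin.deriv_mul_deriv {f : ℝ → ℝ} {x₀ : ℝ} (h : IsLocalMin f x₀)
    (hf : DifferentiableAt ℝ f x₀) (hf' : DifferentiableAt ℝ (deriv f) x₀) :
    deriv (fun y => f y * deriv f y) x₀ = f x₀ * deriv (deriv f) x₀ := by
  rw [deriv_fun_mul hf hf', h.deriv_eq_zero]
  ring

theorem pm_no_positive_local_min_general (a b c : ℝ) (u : ℝ → ℝ)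
    (hreg : ContDiffOn ℝ 2 u (Set.Ioo a b))
    (hbd : ∀ x ∈ Set.Ioo a b, u x ∈ Set.Icc (0 : ℝ) 1)
    (hode : ∀ x ∈ Set.Ioo a b,
      -(c * deriv u x) - deriv (fun y => u y * deriv u y) x = u x * (1 - u x))
    (xt : ℝ) (hxt : xt ∈ Set.Ioo a b) (hmin : IsLocalMin u xt) (hne : u xt ≠ 1) :
    u xt = 0 := by
  have hC2 : ContDiffAt ℝ 2 u xt := hreg.contDiffAt (isOpen_Ioo.mem_nhds hxt)
  have hu' : DifferentiableAt ℝ (deriv u) xt :=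
    (hC2.derivWithin (m := 1) (by norm_num)).differentiableAt one_ne_zero
  have hu'' : 0 ≤ deriv (deriv u) xt := hmin.deriv_deriv_nonneg_s17 hC2.continuousAt
  have hode_at : -(u xt * deriv (deriv u) xt) = u xt * (1 - u xt) := by
    have := hode xt hxt
    rwa [hmin.deriv_mul_deriv (hC2.differentiableAt two_ne_zero) hu', hmin.deriv_eq_zero,
      mul_zero, neg_zero, zero_sub] at this
  obtain ⟨h0, h1⟩ := hbd xt hxt
  have hzero : u xt * (1 - u xt) = 0 :=
    le_antisymm (hode_at ▸ neg_nonpos.mpr (mul_nonneg h0 hu''))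
      (mul_nonneg h0 (sub_nonneg.mpr h1))
  exact (mul_eq_zero.mp hzero).resolve_right fun h => hne (sub_eq_zero.mp h).symm

/-- a nonconstant classical solution of the ε = 0 porous medium FKPP
traveling wave equation vanishes at any interior local minimum where it is not 1. -/
theorem pm_no_positive_local_min (a b c : ℝ) (hab : a < b) (u : ℝ → ℝ)
    (hreg : ContDiffOn ℝ 2 u (Set.Ioo a b))
    (hnonconst : ∃ x ∈ Set.Ioo a b, ∃ y ∈ Set.Ioo a b, u x ≠ u y)
    (hbd : ∀ x ∈ Set.Ioo a b, u x ∈ Set.Icc (0 : ℝ) 1)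
    (hode : ∀ x ∈ Set.Ioo a b,
      -(c * deriv u x) - deriv (fun y => u y * deriv u y) x = u x * (1 - u x))
    (xt : ℝ) (hxt : xt ∈ Set.Ioo a b) (hmin : IsLocalMin u xt) (hne : u xt ≠ 1) :
    u xt = 0 :=
  pm_no_positive_local_min_general a b c u hreg hbd hode xt hxt hmin hne
end
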